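/- (Bounded descriptor space corollary of Theorem 1.) Let d be a square-integrable random vector in ℝⁿ on a probability space (Ω, μ) that almost surely takes values in a bounded set K ⊆ ℝⁿ of diameter at most D, and let C ⊆ ℝⁿ be a measurable set with E[d] ∈ C and with diameter at most d_C. Then ‖d − E[d]‖ ≤ D almost surely (since E[d] lies in the closed convex hull of K, which has the same diameter as K), and consequently Σ_{j=1}^{n} Var(d⁽ʲ⁾) ≤ d_C² + D²·(1 − μ({d ∈ C})). -/

import Mathlib

/-!
Almost surely `d` lies in `K`, so `E[d]` lies in the closed convex set `⋂ x ∈ K, closedBall x D`,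
whence `‖d − E[d]‖ ≤ D` almost surely. The sum of the component variances is `E‖d − E[d]‖²`; on
the event `d ∈ C` the integrand is at most `dC²`, because `E[d] ∈ C` as well, and elsewhere at
most `D²`.
-/

open MeasureTheory ProbabilityTheory

section

variable {Ω : Type*} [MeasurableSpace Ω] {μ : Measure Ω}

theorem norm_sub_integral_le_of_ae_mem [IsProbabilityMeasure μ] {E : Type*}
    [NormedAddCommGroup E] [NormedSpace ℝ E] [CompleteSpace E] {f : Ω → E}
    (hf : Integrable f μ) {K : Set E} {D : ℝ} (hK : ∀ᵐ ω ∂μ, f ω ∈ K)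
    (hKdiam : ∀ x ∈ K, ∀ y ∈ K, ‖x - y‖ ≤ D) :
    ∀ x ∈ K, ‖x - ∫ ω, f ω ∂μ‖ ≤ D := by
  have hmem : ∫ ω, f ω ∂μ ∈ ⋂ x ∈ K, Metric.closedBall x D := by
    refine Convex.integral_mem (convex_iInter₂ fun x _ => convex_closedBall x D)
      (isClosed_biInter fun x _ => Metric.isClosed_closedBall) ?_ hf
    filter_upwards [hK] with ω hω
    exact Set.mem_iInter₂.2 fun x hx => by
      rw [Metric.mem_closedBall, dist_eq_norm]; exact hKdiam _ hω x hx
  intro x hx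
  rw [norm_sub_rev, ← dist_eq_norm]
  exact Set.mem_iInter₂.1 hmem x hx

theorem sum_variance_eq_integral_norm_sub_integral_sq [IsProbabilityMeasure μ]
    {ι : Type*} [Fintype ι] {X : Ω → EuclideanSpace ℝ ι}
    (hX : ∀ j, MemLp (fun ω => X ω j) 2 μ) :
    ∑ j, variance (fun ω => X ω j) μ = ∫ ω, ‖X ω - ∫ ω', X ω' ∂μ‖ ^ 2 ∂μ := by
  have hXint : ∀ j, Integrable (fun ω => X ω j) μ := fun j => (hX j).integrable one_le_two
  have hsq : ∀ j, Integrable (fun ω => (X ω j - ∫ ω', X ω' j ∂μ) ^ 2) μ := fun j =>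
    ((hX j).sub (memLp_const _)).integrable_sq
  simp_rw [EuclideanSpace.real_norm_sq_eq, PiLp.sub_apply, eval_integral_piLp hXint]
  rw [integral_finsetSum _ fun j _ => hsq j]
  exact Finset.sum_congr rfl fun j _ => variance_eq_integral (hX j).aemeasurable

theorem integral_le_mul_measureReal_add_mul_measureReal_compl [IsFiniteMeasure μ]
    {g : Ω → ℝ} (hg : Integrable g μ) {A : Set Ω} (hA : MeasurableSet A) {a b : ℝ}
    (ha : ∀ᵐ ω ∂μ, ω ∈ A → g ω ≤ a) (hb : ∀ᵐ ω ∂μ, ω ∉ A → g ω ≤ b) :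
    ∫ ω, g ω ∂μ ≤ a * μ.real A + b * μ.real Aᶜ := by
  have hOn : ∫ ω in A, g ω ∂μ ≤ ∫ _ in A, a ∂μ :=
    setIntegral_mono_ae_restrict hg.integrableOn integrableOn_const ((ae_restrict_iff' hA).2 ha)
  have hOff : ∫ ω in Aᶜ, g ω ∂μ ≤ ∫ _ in Aᶜ, b ∂μ :=
    setIntegral_mono_ae_restrict hg.integrableOn integrableOn_const
      ((ae_restrict_iff' hA.compl).2 hb)
  rw [← integral_add_compl hA hg]
  rw [setIntegral_const, smul_eq_mul] at hOn hOff
  linarith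

end

theorem sum_variance_le_of_bounded_descriptor_space_general
    {Ω : Type*} [MeasurableSpace Ω] (μ : Measure Ω) [IsProbabilityMeasure μ]
    (n : ℕ)
    (d : Ω → EuclideanSpace ℝ (Fin n)) (hd : Measurable d)
    (h2 : ∀ j : Fin n, MemLp (fun ω => d ω j) 2 μ)
    (K : Set (EuclideanSpace ℝ (Fin n))) (D : ℝ)
    (hK : ∀ᵐ ω ∂μ, d ω ∈ K)
    (hKdiam : ∀ x ∈ K, ∀ y ∈ K, ‖x - y‖ ≤ D)
    (C : Set (EuclideanSpace ℝ (Fin n))) (hC : MeasurableSet C)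
    (dC : ℝ)
    (hmean : (∫ ω, d ω ∂μ) ∈ C)
    (hdiam : ∀ x ∈ C, ∀ y ∈ C, ‖x - y‖ ≤ dC) :
    (∀ᵐ ω ∂μ, ‖d ω - ∫ ω', d ω' ∂μ‖ ≤ D) ∧
    ∑ j : Fin n, variance (fun ω => d ω j) μ
      ≤ dC ^ 2 + D ^ 2 * (1 - (μ (d ⁻¹' C)).toReal) := by
  have hdev : ∀ᵐ ω ∂μ, ‖d ω - ∫ ω', d ω' ∂μ‖ ≤ D := by
    have hint : Integrable d μ := integrable_piLp_iff.2 fun j => (h2 j).integrable one_le_two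
    filter_upwards [hK] with ω hω using norm_sub_integral_le_of_ae_mem hint hK hKdiam _ hω
  have hsq : Integrable (fun ω => ‖d ω - ∫ ω', d ω' ∂μ‖ ^ 2) μ :=
    ((memLp_piLp_iff.2 h2).sub (memLp_const _)).norm.integrable_sq
  refine ⟨hdev, ?_⟩
  rw [sum_variance_eq_integral_norm_sub_integral_sq h2, ← measureReal_def]
  calc ∫ ω, ‖d ω - ∫ ω', d ω' ∂μ‖ ^ 2 ∂μ
      ≤ dC ^ 2 * μ.real (d ⁻¹' C) + D ^ 2 * μ.real (d ⁻¹' C)ᶜ := by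
        refine integral_le_mul_measureReal_add_mul_measureReal_compl hsq (hd hC)
          (.of_forall fun ω hω => ?_) (hdev.mono fun ω hω _ => ?_)
        · exact pow_le_pow_left₀ (norm_nonneg _) (hdiam _ hω _ hmean) 2
        · exact pow_le_pow_left₀ (norm_nonneg _) hω 2
    _ ≤ dC ^ 2 + D ^ 2 * (1 - μ.real (d ⁻¹' C)) := by
        rw [measureReal_compl (hd hC), probReal_univ]
        nlinarith [sq_nonneg dC, measureReal_le_one (μ := μ) (s := d ⁻¹' C)]

/-- Bounded descriptor space corollary of Theorem 1: if `d` almost surely takes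
values in a set `K` of diameter at most `D`, and `C` is a measurable cell
containing `E[d]` with diameter at most `dC`, then `‖d − E[d]‖ ≤ D` almost
surely, and the sum of componentwise variances is at most
`dC² + D²·(1 − μ({d ∈ C}))`. -/
theorem sum_variance_le_of_bounded_descriptor_space
    {Ω : Type*} [MeasurableSpace Ω] (μ : Measure Ω) [IsProbabilityMeasure μ]
    (n : ℕ) (hn : 0 < n)
    (d : Ω → EuclideanSpace ℝ (Fin n)) (hd : Measurable d)
    (h2 : ∀ j : Fin n, MemLp (fun ω => d ω j) 2 μ)
    (K : Set (EuclideanSpace ℝ (Fin n))) (D : ℝ)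
    (hK : ∀ᵐ ω ∂μ, d ω ∈ K)
    (hKdiam : ∀ x ∈ K, ∀ y ∈ K, ‖x - y‖ ≤ D)
    (C : Set (EuclideanSpace ℝ (Fin n))) (hC : MeasurableSet C)
    (dC : ℝ)
    (hmean : (∫ ω, d ω ∂μ) ∈ C)
    (hdiam : ∀ x ∈ C, ∀ y ∈ C, ‖x - y‖ ≤ dC) :
    (∀ᵐ ω ∂μ, ‖d ω - ∫ ω', d ω' ∂μ‖ ≤ D) ∧
    ∑ j : Fin n, variance (fun ω => d ω j) μ
      ≤ dC ^ 2 + D ^ 2 * (1 - (μ (d ⁻¹' C)).toReal) :=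
  sum_variance_le_of_bounded_descriptor_space_general μ n d hd h2 K D hK hKdiam C hC dC hmean hdiam
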